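/- In the two-node model with design matrix C having rows (1, 1, iT/(M-1)), i = 0,...,M-1, and posterior information matrix J = Σ₀⁻¹ + σ⁻²CᵀC with Σ₀ = diag(σ_θ², σ_β², σ_α²), the (3,3) entry of J⁻¹ tends to 0 as M → ∞ (with T, σ, σ_θ, σ_β, σ_α fixed positive); that is, the skew parameter α is consistently estimated in the limit of infinitely many measurements. -/

import Mathlib

open Matrix Filter

/-- Design matrix of the two-node sync-error model: row `i` is `(1, 1, i·T/(M−1))`. -/
noncomputable def designC (M : ℕ) (T : ℝ) : Matrix (Fin M) (Fin 3) ℝ :=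
  Matrix.of fun i j => ![1, 1, (i : ℝ) * T / ((M : ℝ) - 1)] j

/-- Posterior information matrix `J(M) = Σ₀⁻¹ + σ⁻²CᵀC`. -/
noncomputable def infoJ (M : ℕ) (T σ σθ σβ σα : ℝ) : Matrix (Fin 3) (Fin 3) ℝ :=
  (Matrix.diagonal ![σθ ^ 2, σβ ^ 2, σα ^ 2])⁻¹ +
    σ⁻¹ ^ 2 • ((designC M T)ᵀ * designC M T)

/-!
Write `u, v, w` for the prior precisions, `s = σ⁻²`, and `S₁ = ∑ tᵢ`, `S₂ = ∑ tᵢ²` for the sampling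
times `tᵢ = iT/(M-1)`. By Cramer's rule `(J⁻¹)₃₃ = N / det J`, where the leading `2 × 2` minor
`N = uv + (u+v)sM` grows only linearly in `M`, while `det J = wN + s·uv·S₂ + s²(u+v)(M S₂ - S₁²)`.
The last term measures the spread of the sampling times,
`M S₂ - S₁² = T²M²(M+1)/(12(M-1)) ≥ T²M²/12`, so `(J⁻¹)₃₃ = O(1/M)`.
-/

open Finset

theorem Matrix.inv_apply_two_two_fin_three {K : Type*} [Field K]
    (A : Matrix (Fin 3) (Fin 3) K) :
    A⁻¹ 2 2 = (A 0 0 * A 1 1 - A 0 1 * A 1 0) / A.det := by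
  rw [inv_def, smul_apply, adjugate_fin_three, Ring.inverse_eq_inv, smul_eq_mul, inv_mul_eq_div]
  simp

theorem Matrix.inv_diagonal_of_ne_zero {n K : Type*} [Fintype n] [DecidableEq n] [Field K]
    {v : n → K} (hv : ∀ i, v i ≠ 0) : (diagonal v)⁻¹ = diagonal v⁻¹ := by
  refine inv_eq_left_inv ?_
  rw [diagonal_mul_diagonal, ← diagonal_one]
  congr 1
  ext i
  simp [hv i]

theorem transpose_mul_self_of_ones_ones {ι : Type*} [Fintype ι] (t : ι → ℝ) :
    (of fun i j => ![1, 1, t i] j)ᵀ * (of fun i j => ![1, 1, t i] j) =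
      !![(Fintype.card ι : ℝ), Fintype.card ι, ∑ i, t i;
         Fintype.card ι, Fintype.card ι, ∑ i, t i;
         ∑ i, t i, ∑ i, t i, ∑ i, t i ^ 2] := by
  ext j k
  fin_cases j <;> fin_cases k <;> simp [mul_apply, sq]

theorem sum_range_cast_id (n : ℕ) : ∑ i ∈ range n, (i : ℝ) = n * (n - 1) / 2 := by
  induction n with
  | zero => simp
  | succ n ih => rw [sum_range_succ, ih]; push_cast; ring

theorem sum_range_cast_sq (n : ℕ) :
    ∑ i ∈ range n, (i : ℝ) ^ 2 = n * (n - 1) * (2 * n - 1) / 6 := by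
  induction n with
  | zero => simp
  | succ n ih => rw [sum_range_succ, ih]; push_cast; ring

theorem card_mul_sum_sq_sub_sq_sum_range_mul (n : ℕ) (h : ℝ) :
    n * ∑ i ∈ range n, (i * h) ^ 2 - (∑ i ∈ range n, (i * h)) ^ 2
      = h ^ 2 * n ^ 2 * (n ^ 2 - 1) / 12 := by
  simp only [mul_pow, ← sum_mul, sum_range_cast_id, sum_range_cast_sq]
  ring

theorem inv_diagonal_add_smul_apply_two_two_mem_Icc {u v w s n S₁ S₂ : ℝ}
    (hu : 0 < u) (hv : 0 < v) (hw : 0 < w) (hs : 0 < s) (hn : 1 ≤ n) (hΔ : 0 < n * S₂ - S₁ ^ 2) :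
    (diagonal ![u, v, w] + s • !![n, n, S₁; n, n, S₁; S₁, S₁, S₂])⁻¹ 2 2 ∈
      Set.Icc 0 ((u * v + (u + v) * s) * n / (s ^ 2 * (u + v) * (n * S₂ - S₁ ^ 2))) := by
  set J : Matrix (Fin 3) (Fin 3) ℝ :=
    diagonal ![u, v, w] + s • !![n, n, S₁; n, n, S₁; S₁, S₁, S₂]
  set N := u * v + (u + v) * s * n
  set Δ := n * S₂ - S₁ ^ 2
  have hminor : J 0 0 * J 1 1 - J 0 1 * J 1 0 = N := by simp [J, N]; ring
  have hdet : J.det = w * N + s * u * v * S₂ + s ^ 2 * (u + v) * Δ := by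
    simp [J, N, Δ, det_fin_three]; ring
  rw [inv_apply_two_two_fin_three, hminor, hdet]
  have hS₂ : 0 ≤ S₂ := by nlinarith [sq_nonneg S₁]
  have hN : 0 < N := by positivity
  have hN_le : N ≤ (u * v + (u + v) * s) * n := by nlinarith [mul_pos hu hv]
  have hdet_ge : s ^ 2 * (u + v) * Δ ≤ w * N + s * u * v * S₂ + s ^ 2 * (u + v) * Δ := by
    have : 0 ≤ w * N + s * u * v * S₂ := by positivity
    linarith
  exact ⟨by positivity, div_le_div₀ (by positivity) hN_le (by positivity) hdet_ge⟩

theorem infoJ_eq (M : ℕ) (T σ : ℝ) {σθ σβ σα : ℝ} (hθ : σθ ≠ 0) (hβ : σβ ≠ 0)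
    (hα : σα ≠ 0) :
    infoJ M T σ σθ σβ σα = diagonal ![(σθ ^ 2)⁻¹, (σβ ^ 2)⁻¹, (σα ^ 2)⁻¹] +
      σ⁻¹ ^ 2 • !![(M : ℝ), M, ∑ i : Fin M, (i : ℝ) * T / (M - 1);
        M, M, ∑ i : Fin M, (i : ℝ) * T / (M - 1);
        ∑ i : Fin M, (i : ℝ) * T / (M - 1), ∑ i : Fin M, (i : ℝ) * T / (M - 1),
          ∑ i : Fin M, ((i : ℝ) * T / (M - 1)) ^ 2] := by
  have hne : ∀ i, ![σθ ^ 2, σβ ^ 2, σα ^ 2] i ≠ 0 := by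
    intro i; fin_cases i <;> simp [hθ, hβ, hα]
  rw [infoJ, designC, transpose_mul_self_of_ones_ones, Fintype.card_fin,
    inv_diagonal_of_ne_zero hne]
  congr 2
  ext i
  fin_cases i <;> rfl

theorem le_card_mul_sum_sq_sub_sq_sum_of_equispaced {M : ℕ} (hM : 2 ≤ M) (T : ℝ) :
    T ^ 2 * M ^ 2 / 12 ≤
      M * ∑ i : Fin M, ((i : ℝ) * T / (M - 1)) ^ 2 - (∑ i : Fin M, (i : ℝ) * T / (M - 1)) ^ 2 := by
  have hM₂ : (2 : ℝ) ≤ M := by exact_mod_cast hM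
  rw [Fin.sum_univ_eq_sum_range (fun i => (i : ℝ) * T / (M - 1)),
    Fin.sum_univ_eq_sum_range (fun i => ((i : ℝ) * T / (M - 1)) ^ 2)]
  simp only [mul_div_assoc]
  rw [card_mul_sum_sq_sub_sq_sum_range_mul]
  have hM1 : (M : ℝ) - 1 ≠ 0 := by linarith
  have h : (T / (M - 1)) ^ 2 * M ^ 2 * (M ^ 2 - 1) / 12
      = T ^ 2 * (M ^ 2 / 12) * ((M + 1) / (M - 1)) := by
    field_simp
    ring
  rw [h]
  refine le_mul_of_one_le_right (by positivity) ?_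
  rw [one_le_div₀ (by linarith)]
  linarith

theorem exists_infoJ_inv_apply_two_two_mem_Icc {T σ σθ σβ σα : ℝ} (hT : 0 < T) (hσ : 0 < σ)
    (hθ : 0 < σθ) (hβ : 0 < σβ) (hα : 0 < σα) :
    ∃ K : ℝ, ∀ M : ℕ, 2 ≤ M → (infoJ M T σ σθ σβ σα)⁻¹ 2 2 ∈ Set.Icc 0 (K / M) := by
  set u := (σθ ^ 2)⁻¹
  set v := (σβ ^ 2)⁻¹
  set s := σ⁻¹ ^ 2
  have hu : 0 < u := by positivity
  have hv : 0 < v := by positivity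
  have hs : 0 < s := by positivity
  refine ⟨12 * (u * v + (u + v) * s) / (s ^ 2 * (u + v) * T ^ 2), fun M hM => ?_⟩
  have hspread := le_card_mul_sum_sq_sub_sq_sum_of_equispaced hM T
  have hM₁ : (1 : ℝ) ≤ M := by exact_mod_cast one_le_two.trans hM
  rw [infoJ_eq M T σ hθ.ne' hβ.ne' hα.ne']
  obtain ⟨hnonneg, hle⟩ := inv_diagonal_add_smul_apply_two_two_mem_Icc hu hv
    (by positivity : 0 < (σα ^ 2)⁻¹) hs hM₁ (lt_of_lt_of_le (by positivity) hspread)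
  refine ⟨hnonneg, hle.trans ?_⟩
  calc _ ≤ (u * v + (u + v) * s) * M / (s ^ 2 * (u + v) * (T ^ 2 * M ^ 2 / 12)) := by gcongr
    _ = _ := by field_simp

theorem stmt_3 (T σ σθ σβ σα : ℝ) (hT : 0 < T) (hσ : 0 < σ)
    (hθ : 0 < σθ) (hβ : 0 < σβ) (hα : 0 < σα) :
    Tendsto (fun M : ℕ => ((infoJ M T σ σθ σβ σα)⁻¹ : Matrix (Fin 3) (Fin 3) ℝ) 2 2)
      atTop (nhds 0) := by
  obtain ⟨K, hK⟩ := exists_infoJ_inv_apply_two_two_mem_Icc hT hσ hθ hβ hα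
  refine tendsto_of_tendsto_of_tendsto_of_le_of_le' tendsto_const_nhds
    (tendsto_const_div_atTop_nhds_zero_nat K) ?_ ?_
  · filter_upwards [eventually_ge_atTop 2] with M hM using (hK M hM).1
  · filter_upwards [eventually_ge_atTop 2] with M hM using (hK M hM).2
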